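/- arXiv:2109.00762 — 4 statements merged into one kernel-verified Lean document; each statement's English description precedes it below -/
import Mathlib

section
/- Let a = a_k ⊕ a_l be a block diagonal (n = k+l)×(k+l) matrix over F_q, where a_k and a_l have coprime characteristic polynomials. Then K_n(a_k ⊕ a_l) = q^{kl} · K_k(a_k) · K_l(a_l). -/
open Matrix Polynomial

/-- The matrix Kloosterman sum over an arbitrary finite index type. -/
noncomputable def matKloosterman {F : Type*} [Field F] [Fintype F] [DecidableEq F]
    (ι : Type*) [Fintype ι] [DecidableEq ι] (φ : AddChar F ℂ) (a : Matrix ι ι F) : ℂ :=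
  ∑ x : GL ι F,
    φ (Matrix.trace (a * (x : Matrix ι ι F) + ((x⁻¹ : GL ι F) : Matrix ι ι F)))

namespace MatKloostermanAux

set_option linter.unusedSectionVars false

variable {F : Type*} [Field F] [Fintype F] [DecidableEq F] {k l : ℕ}

lemma trace_fromBlocks'' (A : Matrix (Fin k) (Fin k) F) (B : Matrix (Fin k) (Fin l) F)
    (C : Matrix (Fin l) (Fin k) F) (D : Matrix (Fin l) (Fin l) F) :
    (Matrix.fromBlocks A B C D).trace = A.trace + D.trace := by
  simp [Matrix.trace, Fintype.sum_sum_type, Matrix.diag]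

lemma aeval_comm_of_semiconj {m n : Type*} [Fintype m] [Fintype n] [DecidableEq m]
    [DecidableEq n] {A : Matrix m m F} {B : Matrix n n F} {X : Matrix m n F}
    (hX : A * X = X * B) (p : F[X]) :
    (Polynomial.aeval A p) * X = X * (Polynomial.aeval B p) := by
  have hpow : ∀ r : ℕ, A ^ r * X = X * B ^ r := by
    intro r
    induction r with
    | zero => simp
    | succ r ih =>
        rw [pow_succ, pow_succ, Matrix.mul_assoc, hX, ← Matrix.mul_assoc, ih, Matrix.mul_assoc]
  induction p using Polynomial.induction_on' with
  | add p q hp hq => rw [map_add, map_add, Matrix.add_mul, Matrix.mul_add, hp, hq]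
  | monomial r c =>
    simp only [aeval_monomial, Algebra.algebraMap_eq_smul_one, Matrix.smul_mul, smul_mul_assoc,
      Matrix.one_mul, one_mul, Matrix.mul_smul, mul_smul_comm, Matrix.mul_one]
    rw [hpow]

lemma eq_zero_of_semiconj (ak : Matrix (Fin k) (Fin k) F) (al : Matrix (Fin l) (Fin l) F)
    (hc : IsCoprime (Matrix.charpoly ak) (Matrix.charpoly al))
    {X : Matrix (Fin k) (Fin l) F} (hX : ak * X = X * al) : X = 0 := by
  obtain ⟨u, v, huv⟩ := hc
  have h1 : Polynomial.aeval ak (u * ak.charpoly + v * al.charpoly) = 1 := by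
    rw [huv, _root_.map_one]
  rw [_root_.map_add, _root_.map_mul, _root_.map_mul, Matrix.aeval_self_charpoly, mul_zero,
    zero_add] at h1
  calc X = (Polynomial.aeval ak v * Polynomial.aeval ak al.charpoly) * X := by
            rw [h1, Matrix.one_mul]
    _ = Polynomial.aeval ak v * (X * Polynomial.aeval al al.charpoly) := by
            rw [Matrix.mul_assoc, aeval_comm_of_semiconj hX]
    _ = 0 := by rw [Matrix.aeval_self_charpoly, Matrix.mul_zero, Matrix.mul_zero]

lemma sylvester_bijective (ak : Matrix (Fin k) (Fin k) F) (al : Matrix (Fin l) (Fin l) F)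
    (hc : IsCoprime (Matrix.charpoly ak) (Matrix.charpoly al)) :
    Function.Bijective (fun B : Matrix (Fin k) (Fin l) F => ak * B - B * al) := by
  refine Finite.injective_iff_bijective.mp ?_
  intro B₁ B₂ hB
  simp only at hB
  have h0 : ak * (B₁ - B₂) = (B₁ - B₂) * al := by
    rw [Matrix.mul_sub, Matrix.sub_mul]
    exact sub_eq_sub_iff_sub_eq_sub.mp hB
  have := eq_zero_of_semiconj ak al hc h0
  exact sub_eq_zero.mp this

lemma card_matrix : Fintype.card (Matrix (Fin k) (Fin l) F) = Fintype.card F ^ (k * l) := by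
  rw [← Fintype.card_congr (Matrix.of (m := Fin k) (n := Fin l) (α := F))]
  simp [← pow_mul, mul_comm]

lemma trace_stdBasis_mul (i : Fin k) (j : Fin l) (t : F) (C : Matrix (Fin l) (Fin k) F) :
    ((Matrix.single i j t) * C).trace = t * C j i := by
  simp [Matrix.trace, Matrix.diag, Matrix.mul_apply, Matrix.single, ite_and,
    Finset.sum_ite_eq]

lemma sum_char_mul_trace (φ : AddChar F ℂ) (hφ : φ ≠ 1) (C : Matrix (Fin l) (Fin k) F) :
    ∑ M : Matrix (Fin k) (Fin l) F, φ ((M * C).trace) =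
      if C = 0 then ((Fintype.card F : ℂ) ^ (k * l)) else 0 := by
  classical
  set ψ : AddChar (Matrix (Fin k) (Fin l) F) ℂ :=
    { toFun := fun M => φ ((M * C).trace)
      map_zero_eq_one' := by simp
      map_add_eq_mul' := fun M N => by
        show φ ((M + N) * C).trace = φ ((M * C).trace) * φ ((N * C).trace)
        rw [Matrix.add_mul, Matrix.trace_add]
        exact φ.map_add_eq_mul _ _ } with hψ
  have hsum : ∑ M : Matrix (Fin k) (Fin l) F, φ ((M * C).trace) = ∑ M, ψ M := rfl
  rw [hsum, AddChar.sum_eq_ite]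
  by_cases hC : C = 0
  · have hz : ψ = 0 := by
      ext M
      simp [hψ, hC]
    rw [if_pos hz, if_pos hC, card_matrix]
    push_cast
    ring
  · have hz : ψ ≠ 0 := by
      rw [← AddChar.one_eq_zero, AddChar.ne_one_iff]
      obtain ⟨s, hs⟩ := AddChar.ne_one_iff.mp hφ
      have hentry : ∃ p q, C p q ≠ 0 := by
        by_contra hcon
        push_neg at hcon
        exact hC (Matrix.ext fun p q => hcon p q)
      obtain ⟨p, q, hpq⟩ := hentry
      refine ⟨Matrix.single q p (s * (C p q)⁻¹), ?_⟩
      have hval : ψ (Matrix.single q p (s * (C p q)⁻¹)) = φ s := by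
        show φ _ = φ s
        rw [trace_stdBasis_mul]
        congr 1
        field_simp
      rw [hval]
      exact hs
    rw [if_neg hz, if_neg hC]

variable (φ : AddChar F ℂ) (ak : Matrix (Fin k) (Fin k) F) (al : Matrix (Fin l) (Fin l) F)

lemma trace_conj_aux {ι : Type*} [Fintype ι] [DecidableEq ι] (a U V X Xi : Matrix ι ι F)
    (hVU : V * U = 1) :
    (a * (U * X * V) + U * Xi * V).trace = ((V * a * U) * X + Xi).trace := by
  have e1 : (a * (U * X * V)).trace = ((V * a * U) * X).trace := by
    have h1 : a * (U * X * V) = (a * (U * X)) * V := by simp only [Matrix.mul_assoc]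
    rw [h1, Matrix.trace_mul_comm]
    have h2 : V * (a * (U * X)) = (V * a * U) * X := by simp only [Matrix.mul_assoc]
    rw [h2]
  have e2 : (U * Xi * V).trace = Xi.trace := by
    rw [Matrix.trace_mul_comm]
    have h3 : V * (U * Xi) = (V * U) * Xi := by simp only [Matrix.mul_assoc]
    rw [h3, hVU, Matrix.one_mul]
  rw [Matrix.trace_add, Matrix.trace_add, e1, e2]

lemma conj_step (B : Matrix (Fin k) (Fin l) F) :
    matKloosterman (Fin k ⊕ Fin l) φ (Matrix.fromBlocks ak 0 0 al) =
      ∑ x : GL (Fin k ⊕ Fin l) F,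
        φ ((Matrix.fromBlocks ak (ak * B - B * al) 0 al * (x : Matrix (Fin k ⊕ Fin l) (Fin k ⊕ Fin l) F)
            + ((x⁻¹ : GL (Fin k ⊕ Fin l) F) : Matrix (Fin k ⊕ Fin l) (Fin k ⊕ Fin l) F)).trace) := by
  set u : GL (Fin k ⊕ Fin l) F :=
    ⟨Matrix.fromBlocks 1 B 0 1, Matrix.fromBlocks 1 (-B) 0 1,
      by rw [Matrix.fromBlocks_multiply]; simp [Matrix.fromBlocks_one],
      by rw [Matrix.fromBlocks_multiply]; simp [Matrix.fromBlocks_one]⟩ with hu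
  have hU : (u : Matrix (Fin k ⊕ Fin l) (Fin k ⊕ Fin l) F) = Matrix.fromBlocks 1 B 0 1 := rfl
  have hV : ((u⁻¹ : GL (Fin k ⊕ Fin l) F) : Matrix (Fin k ⊕ Fin l) (Fin k ⊕ Fin l) F)
      = Matrix.fromBlocks 1 (-B) 0 1 := rfl
  have hVU : ((u⁻¹ : GL (Fin k ⊕ Fin l) F) : Matrix (Fin k ⊕ Fin l) (Fin k ⊕ Fin l) F)
      * (u : Matrix (Fin k ⊕ Fin l) (Fin k ⊕ Fin l) F) = 1 := by
    rw [← Units.val_mul, inv_mul_cancel, Units.val_one]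
  have hVaU : ((u⁻¹ : GL (Fin k ⊕ Fin l) F) : Matrix (Fin k ⊕ Fin l) (Fin k ⊕ Fin l) F) * Matrix.fromBlocks ak 0 0 al
      * (u : Matrix (Fin k ⊕ Fin l) (Fin k ⊕ Fin l) F) = Matrix.fromBlocks ak (ak * B - B * al) 0 al := by
    rw [hU, hV, Matrix.fromBlocks_multiply, Matrix.fromBlocks_multiply]
    simp [sub_eq_add_neg, add_comm]
  unfold matKloosterman
  refine (Fintype.sum_equiv ((Equiv.mulLeft u).trans (Equiv.mulRight u⁻¹)) _ _ fun x => ?_).symm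
  have he : ((Equiv.mulLeft u).trans (Equiv.mulRight u⁻¹)) x = u * x * u⁻¹ := rfl
  rw [he]
  have hinv : (u * x * u⁻¹)⁻¹ = u * x⁻¹ * u⁻¹ := by group
  rw [hinv]
  have hcoe1 : ((u * x * u⁻¹ : GL (Fin k ⊕ Fin l) F) : Matrix _ _ F)
      = (u : Matrix (Fin k ⊕ Fin l) (Fin k ⊕ Fin l) F) * (x : Matrix (Fin k ⊕ Fin l) (Fin k ⊕ Fin l) F) * ((u⁻¹ : GL (Fin k ⊕ Fin l) F) : Matrix (Fin k ⊕ Fin l) (Fin k ⊕ Fin l) F) := by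
    rw [Units.val_mul, Units.val_mul]
  have hcoe2 : ((u * x⁻¹ * u⁻¹ : GL (Fin k ⊕ Fin l) F) : Matrix _ _ F)
      = (u : Matrix (Fin k ⊕ Fin l) (Fin k ⊕ Fin l) F) * ((x⁻¹ : GL (Fin k ⊕ Fin l) F) : Matrix (Fin k ⊕ Fin l) (Fin k ⊕ Fin l) F)
        * ((u⁻¹ : GL (Fin k ⊕ Fin l) F) : Matrix (Fin k ⊕ Fin l) (Fin k ⊕ Fin l) F) := by
    rw [Units.val_mul, Units.val_mul]
  rw [hcoe1, hcoe2, trace_conj_aux _ _ _ _ _ hVU, hVaU]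

lemma trace_block_upper (M : Matrix (Fin k) (Fin l) F)
    (X Xi : Matrix (Fin k ⊕ Fin l) (Fin k ⊕ Fin l) F) :
    (Matrix.fromBlocks ak M 0 al * X + Xi).trace
      = (Matrix.fromBlocks ak 0 0 al * X + Xi).trace + (M * X.toBlocks₂₁).trace := by
  rw [Matrix.trace_add, Matrix.trace_add]
  rw [← Matrix.fromBlocks_toBlocks X]
  simp only [Matrix.toBlocks_fromBlocks₂₁, Matrix.fromBlocks_multiply, Matrix.zero_mul,
    Matrix.mul_zero, add_zero, zero_add, trace_fromBlocks'', Matrix.trace_add]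
  ring

lemma isUnit_blocks {x : GL (Fin k ⊕ Fin l) F}
    (hx : ((x : Matrix (Fin k ⊕ Fin l) (Fin k ⊕ Fin l) F)).toBlocks₂₁ = 0) :
    IsUnit ((x : Matrix (Fin k ⊕ Fin l) (Fin k ⊕ Fin l) F).toBlocks₁₁) ∧
      IsUnit ((x : Matrix (Fin k ⊕ Fin l) (Fin k ⊕ Fin l) F).toBlocks₂₂) := by
  have hdet : IsUnit (x : Matrix (Fin k ⊕ Fin l) (Fin k ⊕ Fin l) F).det := by
    rw [← Matrix.isUnit_iff_isUnit_det]
    exact x.isUnit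
  rw [← Matrix.fromBlocks_toBlocks (x : Matrix (Fin k ⊕ Fin l) (Fin k ⊕ Fin l) F), hx] at hdet
  rw [Matrix.det_fromBlocks_zero₂₁] at hdet
  exact ⟨(Matrix.isUnit_iff_isUnit_det _).mpr (isUnit_of_mul_isUnit_left hdet),
    (Matrix.isUnit_iff_isUnit_det _).mpr (isUnit_of_mul_isUnit_left (by rwa [mul_comm] at hdet))⟩

/-- The unit given by an invertible block upper triangular matrix. -/
def mkBlockUnit (A : GL (Fin k) F) (D : GL (Fin l) F) (B : Matrix (Fin k) (Fin l) F) :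
    GL (Fin k ⊕ Fin l) F where
  val := Matrix.fromBlocks (A : Matrix (Fin k) (Fin k) F) B 0 (D : Matrix (Fin l) (Fin l) F)
  inv := Matrix.fromBlocks ((A⁻¹ : GL (Fin k) F) : Matrix (Fin k) (Fin k) F)
    (-(((A⁻¹ : GL (Fin k) F) : Matrix (Fin k) (Fin k) F) * B * ((D⁻¹ : GL (Fin l) F) : Matrix (Fin l) (Fin l) F))) 0
    ((D⁻¹ : GL (Fin l) F) : Matrix (Fin l) (Fin l) F)
  val_inv := by
    have hA : (A : Matrix (Fin k) (Fin k) F) * ((A⁻¹ : GL (Fin k) F) : Matrix (Fin k) (Fin k) F) = 1 := by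
      rw [← Units.val_mul, mul_inv_cancel, Units.val_one]
    have hD : (D : Matrix (Fin l) (Fin l) F) * ((D⁻¹ : GL (Fin l) F) : Matrix (Fin l) (Fin l) F) = 1 := by
      rw [← Units.val_mul, mul_inv_cancel, Units.val_one]
    have h12 : (A : Matrix (Fin k) (Fin k) F)
        * (-(((A⁻¹ : GL (Fin k) F) : Matrix (Fin k) (Fin k) F) * B * ((D⁻¹ : GL (Fin l) F) : Matrix (Fin l) (Fin l) F)))
        + B * ((D⁻¹ : GL (Fin l) F) : Matrix (Fin l) (Fin l) F) = 0 := by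
      rw [Matrix.mul_neg, ← Matrix.mul_assoc, ← Matrix.mul_assoc, hA, Matrix.one_mul,
        neg_add_cancel]
    rw [Matrix.fromBlocks_multiply]
    simp only [Matrix.mul_zero, Matrix.zero_mul, add_zero, zero_add]
    rw [hA, hD, h12, Matrix.fromBlocks_one]
  inv_val := by
    have hA : ((A⁻¹ : GL (Fin k) F) : Matrix (Fin k) (Fin k) F) * (A : Matrix (Fin k) (Fin k) F) = 1 := by
      rw [← Units.val_mul, inv_mul_cancel, Units.val_one]
    have hD : ((D⁻¹ : GL (Fin l) F) : Matrix (Fin l) (Fin l) F) * (D : Matrix (Fin l) (Fin l) F) = 1 := by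
      rw [← Units.val_mul, inv_mul_cancel, Units.val_one]
    have h12 : ((A⁻¹ : GL (Fin k) F) : Matrix (Fin k) (Fin k) F) * B
        + (-(((A⁻¹ : GL (Fin k) F) : Matrix (Fin k) (Fin k) F) * B * ((D⁻¹ : GL (Fin l) F) : Matrix (Fin l) (Fin l) F)))
          * (D : Matrix (Fin l) (Fin l) F) = 0 := by
      rw [Matrix.neg_mul, Matrix.mul_assoc
        (((A⁻¹ : GL (Fin k) F) : Matrix (Fin k) (Fin k) F) * B) _ _, hD, Matrix.mul_one, add_neg_cancel]
    rw [Matrix.fromBlocks_multiply]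
    simp only [Matrix.mul_zero, Matrix.zero_mul, add_zero, zero_add]
    rw [hA, hD, h12, Matrix.fromBlocks_one]

lemma filtered_sum :
    ∑ x ∈ Finset.univ.filter (fun x : GL (Fin k ⊕ Fin l) F =>
        ((x : Matrix (Fin k ⊕ Fin l) (Fin k ⊕ Fin l) F)).toBlocks₂₁ = 0),
      φ ((Matrix.fromBlocks ak 0 0 al * (x : Matrix (Fin k ⊕ Fin l) (Fin k ⊕ Fin l) F)
          + ((x⁻¹ : GL (Fin k ⊕ Fin l) F) : Matrix (Fin k ⊕ Fin l) (Fin k ⊕ Fin l) F)).trace)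
    = (Fintype.card F : ℂ) ^ (k * l) * matKloosterman (Fin k) φ ak
        * matKloosterman (Fin l) φ al := by
  classical
  have hbij :
      (∑ p : GL (Fin k) F × GL (Fin l) F × Matrix (Fin k) (Fin l) F,
          φ ((ak * (p.1 : Matrix (Fin k) (Fin k) F)
              + ((p.1⁻¹ : GL (Fin k) F) : Matrix (Fin k) (Fin k) F)).trace)
            * φ ((al * (p.2.1 : Matrix (Fin l) (Fin l) F)
              + ((p.2.1⁻¹ : GL (Fin l) F) : Matrix (Fin l) (Fin l) F)).trace))
        = ∑ x ∈ Finset.univ.filter (fun x : GL (Fin k ⊕ Fin l) F =>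
            ((x : Matrix (Fin k ⊕ Fin l) (Fin k ⊕ Fin l) F)).toBlocks₂₁ = 0),
          φ ((Matrix.fromBlocks ak 0 0 al * (x : Matrix (Fin k ⊕ Fin l) (Fin k ⊕ Fin l) F)
            + ((x⁻¹ : GL (Fin k ⊕ Fin l) F) : Matrix (Fin k ⊕ Fin l) (Fin k ⊕ Fin l) F)).trace) := by
    refine Finset.sum_bij'
      (i := fun p _ => mkBlockUnit p.1 p.2.1 p.2.2)
      (j := fun x hx =>
        ((isUnit_blocks ((Finset.mem_filter.mp hx).2)).1.unit,
          (isUnit_blocks ((Finset.mem_filter.mp hx).2)).2.unit,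
          (x : Matrix (Fin k ⊕ Fin l) (Fin k ⊕ Fin l) F).toBlocks₁₂))
      ?_ ?_ ?_ ?_ ?_
    · intro p _
      simp [Finset.mem_filter, mkBlockUnit]
    · intro x hx
      exact Finset.mem_univ _
    · intro p _
      refine Prod.ext ?_ (Prod.ext ?_ ?_)
      · apply Units.ext
        simp [mkBlockUnit]
      · apply Units.ext
        simp [mkBlockUnit]
      · simp [mkBlockUnit]
    · intro x hx
      apply Units.ext
      simp only [mkBlockUnit, IsUnit.unit_spec]
      conv_rhs => rw [← Matrix.fromBlocks_toBlocks
        (x : Matrix (Fin k ⊕ Fin l) (Fin k ⊕ Fin l) F), (Finset.mem_filter.mp hx).2]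
    · intro p _
      rw [← φ.map_add_eq_mul]
      congr 1
      have hval : ((mkBlockUnit p.1 p.2.1 p.2.2 : GL (Fin k ⊕ Fin l) F) : Matrix (Fin k ⊕ Fin l) (Fin k ⊕ Fin l) F)
          = Matrix.fromBlocks (p.1 : Matrix (Fin k) (Fin k) F) p.2.2 0 (p.2.1 : Matrix (Fin l) (Fin l) F) := rfl
      have hinv : (((mkBlockUnit p.1 p.2.1 p.2.2)⁻¹ : GL (Fin k ⊕ Fin l) F) : Matrix (Fin k ⊕ Fin l) (Fin k ⊕ Fin l) F)
          = Matrix.fromBlocks ((p.1⁻¹ : GL (Fin k) F) : Matrix (Fin k) (Fin k) F)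
              (-(((p.1⁻¹ : GL (Fin k) F) : Matrix (Fin k) (Fin k) F) * p.2.2
                  * ((p.2.1⁻¹ : GL (Fin l) F) : Matrix (Fin l) (Fin l) F))) 0
              ((p.2.1⁻¹ : GL (Fin l) F) : Matrix (Fin l) (Fin l) F) := rfl
      rw [hval, hinv, Matrix.fromBlocks_multiply]
      simp only [Matrix.mul_zero, Matrix.zero_mul, add_zero, zero_add]
      rw [Matrix.fromBlocks_add, trace_fromBlocks'']
  rw [← hbij]
  rw [Fintype.sum_prod_type]
  have hinner : ∀ A : GL (Fin k) F,
      (∑ q : GL (Fin l) F × Matrix (Fin k) (Fin l) F,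
        φ ((ak * (A : Matrix (Fin k) (Fin k) F)
            + ((A⁻¹ : GL (Fin k) F) : Matrix (Fin k) (Fin k) F)).trace)
          * φ ((al * (q.1 : Matrix (Fin l) (Fin l) F)
            + ((q.1⁻¹ : GL (Fin l) F) : Matrix (Fin l) (Fin l) F)).trace))
      = (Fintype.card F : ℂ) ^ (k * l)
          * (φ ((ak * (A : Matrix (Fin k) (Fin k) F)
              + ((A⁻¹ : GL (Fin k) F) : Matrix (Fin k) (Fin k) F)).trace)
            * matKloosterman (Fin l) φ al) := by
    intro A
    rw [Fintype.sum_prod_type]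
    simp only [Finset.sum_const, Finset.card_univ, card_matrix, nsmul_eq_mul, Nat.cast_pow]
    rw [← Finset.mul_sum, ← Finset.mul_sum]
    rw [matKloosterman]
  rw [Finset.sum_congr rfl fun A _ => hinner A]
  rw [← Finset.mul_sum]
  unfold matKloosterman
  rw [← Finset.sum_mul]
  ring

end MatKloostermanAux

/-- If `a_k` and `a_l` have coprime characteristic polynomials then
`K_{k+l}(a_k ⊕ a_l) = q^{kl} K_k(a_k) K_l(a_l)`. -/
theorem matKloosterman_blockDiag {F : Type*} [Field F] [Fintype F] [DecidableEq F]
    {k l : ℕ} (φ : AddChar F ℂ) (hφ : φ ≠ 1)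
    (ak : Matrix (Fin k) (Fin k) F) (al : Matrix (Fin l) (Fin l) F)
    (h : IsCoprime (Matrix.charpoly ak) (Matrix.charpoly al)) :
    matKloosterman (Fin k ⊕ Fin l) φ (Matrix.fromBlocks ak 0 0 al) =
      (Fintype.card F : ℂ) ^ (k * l) *
        matKloosterman (Fin k) φ ak * matKloosterman (Fin l) φ al := by
  classical
  have hq : ((Fintype.card F : ℂ)) ^ (k * l) ≠ 0 :=
    pow_ne_zero _ (Nat.cast_ne_zero.mpr Fintype.card_ne_zero)
  have hmain : (Fintype.card F : ℂ) ^ (k * l)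
        * matKloosterman (Fin k ⊕ Fin l) φ (Matrix.fromBlocks ak 0 0 al)
      = (Fintype.card F : ℂ) ^ (k * l)
        * ∑ x ∈ Finset.univ.filter (fun x : GL (Fin k ⊕ Fin l) F =>
            ((x : Matrix (Fin k ⊕ Fin l) (Fin k ⊕ Fin l) F)).toBlocks₂₁ = 0),
          φ ((Matrix.fromBlocks ak 0 0 al * (x : Matrix (Fin k ⊕ Fin l) (Fin k ⊕ Fin l) F)
            + ((x⁻¹ : GL (Fin k ⊕ Fin l) F) : Matrix (Fin k ⊕ Fin l) (Fin k ⊕ Fin l) F)).trace) := by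
    calc (Fintype.card F : ℂ) ^ (k * l)
          * matKloosterman (Fin k ⊕ Fin l) φ (Matrix.fromBlocks ak 0 0 al)
        = ∑ _B : Matrix (Fin k) (Fin l) F,
            matKloosterman (Fin k ⊕ Fin l) φ (Matrix.fromBlocks ak 0 0 al) := by
          rw [Finset.sum_const, Finset.card_univ, MatKloostermanAux.card_matrix, nsmul_eq_mul,
            Nat.cast_pow]
      _ = ∑ B : Matrix (Fin k) (Fin l) F, ∑ x : GL (Fin k ⊕ Fin l) F,
            φ ((Matrix.fromBlocks ak (ak * B - B * al) 0 al
                * (x : Matrix (Fin k ⊕ Fin l) (Fin k ⊕ Fin l) F)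
              + ((x⁻¹ : GL (Fin k ⊕ Fin l) F) : Matrix (Fin k ⊕ Fin l) (Fin k ⊕ Fin l) F)).trace) :=
          Finset.sum_congr rfl fun B _ => MatKloostermanAux.conj_step φ ak al B
      _ = ∑ M : Matrix (Fin k) (Fin l) F, ∑ x : GL (Fin k ⊕ Fin l) F,
            φ ((Matrix.fromBlocks ak M 0 al * (x : Matrix (Fin k ⊕ Fin l) (Fin k ⊕ Fin l) F)
              + ((x⁻¹ : GL (Fin k ⊕ Fin l) F) : Matrix (Fin k ⊕ Fin l) (Fin k ⊕ Fin l) F)).trace) :=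
          Fintype.sum_bijective _ (MatKloostermanAux.sylvester_bijective ak al h) _ _
            fun B => rfl
      _ = ∑ x : GL (Fin k ⊕ Fin l) F, ∑ M : Matrix (Fin k) (Fin l) F,
            φ ((Matrix.fromBlocks ak M 0 al * (x : Matrix (Fin k ⊕ Fin l) (Fin k ⊕ Fin l) F)
              + ((x⁻¹ : GL (Fin k ⊕ Fin l) F) : Matrix (Fin k ⊕ Fin l) (Fin k ⊕ Fin l) F)).trace) := Finset.sum_comm
      _ = ∑ x : GL (Fin k ⊕ Fin l) F,
            φ ((Matrix.fromBlocks ak 0 0 al * (x : Matrix (Fin k ⊕ Fin l) (Fin k ⊕ Fin l) F)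
              + ((x⁻¹ : GL (Fin k ⊕ Fin l) F) : Matrix (Fin k ⊕ Fin l) (Fin k ⊕ Fin l) F)).trace)
            * (if ((x : Matrix (Fin k ⊕ Fin l) (Fin k ⊕ Fin l) F)).toBlocks₂₁ = 0
                then (Fintype.card F : ℂ) ^ (k * l) else 0) := by
          refine Finset.sum_congr rfl fun x _ => ?_
          rw [← MatKloostermanAux.sum_char_mul_trace φ hφ
            ((x : Matrix (Fin k ⊕ Fin l) (Fin k ⊕ Fin l) F)).toBlocks₂₁, Finset.mul_sum]
          refine Finset.sum_congr rfl fun M _ => ?_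
          rw [MatKloostermanAux.trace_block_upper, φ.map_add_eq_mul]
      _ = _ := by
          rw [Finset.mul_sum]
          rw [Finset.sum_filter]
          refine Finset.sum_congr rfl fun x _ => ?_
          split_ifs with hcond
          · ring
          · rw [mul_zero]
  have hK := mul_left_cancel₀ hq hmain
  rw [hK, MatKloostermanAux.filtered_sum φ ak al]
end

section
/- Let a ∈ M_n(F_q) have rank r. Then K_n(a, 0) := ∑_{x ∈ GL_n(F_q)} φ(tr(a x)) = (−1)^r q^{−r(r+1)/2} q^{r n} |GL_{n−r}(F_q)|. -/
/-!
The sum `a ↦ ∑_{x ∈ GL_n} φ(tr(a x))` is unchanged when `a` is replaced by `P a Q` with `P, Q`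
invertible, so we may take `a` in rank normal form `fromBlocks 1 0 0 0`, where the summand is
`φ` of the trace of the upper left `r × r` block of `x`. Split off the first row `v` of `x`: the
matrix is invertible iff the remaining rows `R` are independent and `v ∉ span R`. Since
`∑_v φ(v₀)` vanishes, the sum of `φ(v₀)` over `v ∉ span R` is minus the sum over `span R`, which is
`-q^(n-1)` if the first column of `R` vanishes and `0` otherwise; in the first case `R` is an
invertible `(n-1) × (n-1)` matrix bordered by zeros. Hence each of the `r` steps contributes a
factor `-q^(n-1)` and lowers both `n` and `r` by one.
-/

open Matrix Finset

lemma sum_units_eq_sum_ite_isUnit {A M : Type*} [Monoid A] [Fintype A] [Fintype Aˣ]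
    [AddCommMonoid M] [DecidablePred (IsUnit : A → Prop)] (f : A → M) :
    ∑ u : Aˣ, f u = ∑ a, if IsUnit a then f a else 0 := by
  have hunits : univ.filter (fun a : A ↦ IsUnit a) = univ.map ⟨_, Units.val_injective⟩ := by
    ext a
    simp only [mem_filter, mem_univ, true_and, mem_map, Function.Embedding.coeFn_mk]
    rfl
  rw [← sum_filter, hunits, sum_map]
  rfl

def Equiv.optionSumEquiv (α β : Type*) : Option α ⊕ β ≃ Option (α ⊕ β) where
  toFun := Sum.elim (Option.map Sum.inl) (some ∘ Sum.inr)
  invFun o := o.elim (Sum.inl none) (Sum.map some id)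
  left_inv := by rintro ((_ | _) | _) <;> rfl
  right_inv := by rintro (_ | _ | _) <;> rfl

namespace Matrix.GeneralLinearGroup

variable {ι κ R : Type*} [Fintype ι] [DecidableEq ι] [Fintype κ] [DecidableEq κ] [CommSemiring R]

def reindex (e : ι ≃ κ) : GL ι R ≃* GL κ R :=
  Units.mapEquiv (reindexAlgEquiv R R e).toMulEquiv

@[simp]
lemma coe_reindex (e : ι ≃ κ) (x : GL ι R) :
    (reindex e x : Matrix κ κ R) = Matrix.reindex e e x :=
  rfl

end Matrix.GeneralLinearGroup

section TraceSums

variable {ι κ R M : Type*} [Fintype ι] [DecidableEq ι] [Fintype κ] [DecidableEq κ]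
  [CommSemiring R] [Fintype R] [DecidableEq R] [AddCommMonoid M]

lemma sum_GL_trace_units_mul_mul (ψ : R → M) (a : Matrix ι ι R) {V U : Matrix ι ι R}
    (hV : IsUnit V) (hU : IsUnit U) :
    ∑ x : GL ι R, ψ (trace (V * a * U * (x : Matrix ι ι R)))
      = ∑ x : GL ι R, ψ (trace (a * (x : Matrix ι ι R))) := by
  refine Fintype.sum_equiv ((Equiv.mulLeft hU.unit).trans (Equiv.mulRight hV.unit)) _ _ fun x ↦ ?_
  simp only [Equiv.trans_apply, Equiv.coe_mulLeft, Equiv.coe_mulRight, Units.val_mul,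
    IsUnit.unit_spec]
  rw [mul_assoc, mul_assoc, trace_mul_comm, ← mul_assoc, ← mul_assoc, ← mul_assoc]

lemma sum_GL_trace_submatrix_mul (ψ : R → M) (e : ι ≃ κ) (a : Matrix κ κ R) :
    ∑ x : GL ι R, ψ (trace (a.submatrix e e * (x : Matrix ι ι R)))
      = ∑ y : GL κ R, ψ (trace (a * (y : Matrix κ κ R))) := by
  refine Fintype.sum_equiv (GeneralLinearGroup.reindex e).toEquiv _ _ fun x ↦ ?_
  simp only [MulEquiv.toEquiv_eq_coe, EquivLike.coe_coe, GeneralLinearGroup.coe_reindex]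
  have hx : (x : Matrix ι ι R) = ((x : Matrix ι ι R).submatrix e.symm e.symm).submatrix e e := by
    simp
  conv_lhs => rw [hx]
  rw [submatrix_mul_equiv, reindex_apply]
  simp only [trace, diag_apply, submatrix_apply]
  exact congrArg ψ (e.sum_comp fun k ↦ (a * (x : Matrix ι ι R).submatrix e.symm e.symm) k k)

end TraceSums

lemma trace_fromBlocks_one_zero_zero_zero_mul {m n R : Type*} [Fintype m] [Fintype n]
    [DecidableEq m] [Semiring R] (x : Matrix (m ⊕ n) (m ⊕ n) R) :
    trace (fromBlocks 1 0 0 0 * x) = trace x.toBlocks₁₁ := by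
  conv_lhs => rw [← fromBlocks_toBlocks x, fromBlocks_multiply]
  simp [trace, Fintype.sum_sum_type]

section CharacterSums

variable {F V : Type*} [Field F] [AddCommGroup V] [Module F V] [Fintype V]

lemma sum_addChar_comp_linearMap {φ : AddChar F ℂ} (hφ : φ ≠ 1) (ℓ : V →ₗ[F] F)
    [Decidable (ℓ = 0)] :
    ∑ v, φ (ℓ v) = if ℓ = 0 then (Fintype.card V : ℂ) else 0 := by
  split_ifs with hℓ
  · simp [hℓ]
  · obtain ⟨t, ht⟩ := AddChar.ne_one_iff.mp hφ
    obtain ⟨v, rfl⟩ := LinearMap.surjective_iff_ne_zero.mpr hℓ t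
    exact AddChar.sum_eq_zero_of_ne_one (ψ := φ.compAddMonoidHom ℓ.toAddMonoidHom)
      (AddChar.ne_one_iff.mpr ⟨v, ht⟩)

lemma sum_addChar_comp_linearMap_compl {φ : AddChar F ℂ} (hφ : φ ≠ 1) {ℓ : V →ₗ[F] F}
    (hℓ : ℓ ≠ 0) (W : Submodule F V) [DecidablePred (· ∈ W)] [Decidable (W ≤ LinearMap.ker ℓ)] :
    ∑ v with v ∉ W, φ (ℓ v) = if W ≤ LinearMap.ker ℓ then -(Nat.card W : ℂ) else 0 := by
  classical
  have hW : ∑ v with v ∈ W, φ (ℓ v) = if W ≤ LinearMap.ker ℓ then (Nat.card W : ℂ) else 0 := by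
    rw [← sum_subtype_eq_sum_filter, subtype_univ]
    exact (sum_addChar_comp_linearMap hφ (ℓ ∘ₗ W.subtype)).trans
      (by simp [LinearMap.le_ker_iff_comp_subtype_eq_zero, Nat.card_eq_fintype_card])
  have hV := (sum_filter_add_sum_filter_not univ (· ∈ W) fun v ↦ φ (ℓ v)).symm
  rw [sum_addChar_comp_linearMap hφ ℓ, if_neg hℓ, hW] at hV
  split_ifs at hV ⊢ <;> linear_combination -hV

end CharacterSums

section FirstRow

variable {F ι : Type*} [Field F] [Fintype F] [DecidableEq F] [Fintype ι] [DecidableEq ι]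

lemma sum_addChar_apply_none_compl_span {φ : AddChar F ℂ} (hφ : φ ≠ 1)
    {R : ι → Option ι → F} (hR : LinearIndependent F R)
    [DecidablePred (· ∈ Submodule.span F (Set.range R))] :
    ∑ v : Option ι → F with v ∉ Submodule.span F (Set.range R), φ (v none)
      = if ∀ i, R i none = 0 then -(Fintype.card F : ℂ) ^ Fintype.card ι else 0 := by
  classical
  have hproj : (LinearMap.proj none : (Option ι → F) →ₗ[F] F) ≠ 0 := fun h ↦ by
    simpa using LinearMap.congr_fun h (Pi.single none 1)
  have hle : Submodule.span F (Set.range R) ≤ LinearMap.ker (LinearMap.proj none)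
      ↔ ∀ i, R i none = 0 := by
    simp [Submodule.span_le, Set.range_subset_iff]
  have hcard : Nat.card (Submodule.span F (Set.range R)) = Fintype.card F ^ Fintype.card ι := by
    rw [Module.natCard_eq_pow_finrank (K := F), finrank_span_eq_card hR,
      Nat.card_eq_fintype_card]
  refine (sum_addChar_comp_linearMap_compl hφ hproj _).trans ?_
  rw [hcard, Nat.cast_pow]
  exact if_congr hle rfl rfl

open Classical in
lemma sum_linearIndependent_apply_none_eq_zero {M : Type*} [AddCommMonoid M]
    (g : Matrix ι ι F → M) :
    ∑ R : ι → Option ι → F,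
        (if LinearIndependent F R ∧ ∀ i, R i none = 0 then g (of fun i j ↦ R i (some j)) else 0)
      = ∑ y : Matrix ι ι F, if IsUnit y then g y else 0 := by
  let extend : (ι → F) →ₗ[F] Option ι → F :=
    (LinearEquiv.piOptionEquivProd F).symm.toLinearMap ∘ₗ LinearMap.inr F F (ι → F)
  have extend_linearIndependent_iff (y : Matrix ι ι F) :
      LinearIndependent F (extend ∘ y.row) ↔ IsUnit y := by
    rw [extend.linearIndependent_iff, linearIndependent_rows_iff_isUnit]
    simp [extend, LinearEquiv.ker_comp]
  have extend_restrict {R : ι → Option ι → F} (hR : ∀ i, R i none = 0) :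
      extend ∘ (fun i j ↦ R i (some j)) = R := by
    funext i o
    cases o
    exacts [(hR i).symm, rfl]
  rw [← sum_filter, ← sum_filter]
  refine sum_nbij' (fun R ↦ of fun i j ↦ R i (some j)) (fun y ↦ extend ∘ y.row) ?_ ?_ ?_ ?_
    fun _ _ ↦ rfl
  · simp only [mem_filter, mem_univ, true_and, and_imp]
    intro R hR hR0
    rw [← extend_linearIndependent_iff]
    exact (extend_restrict hR0).symm ▸ hR
  · simp only [mem_filter, mem_univ, true_and]
    exact fun y hy ↦ ⟨(extend_linearIndependent_iff y).mpr hy, fun _ ↦ rfl⟩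
  · simp only [mem_filter, mem_univ, true_and, and_imp]
    exact fun R _ hR0 ↦ extend_restrict hR0
  · exact fun _ _ ↦ rfl

lemma sum_GL_option_addChar_corner_mul {φ : AddChar F ℂ} (hφ : φ ≠ 1) (g : Matrix ι ι F → ℂ) :
    ∑ x : GL (Option ι) F, φ ((x : Matrix (Option ι) (Option ι) F) none none) *
        g ((x : Matrix (Option ι) (Option ι) F).submatrix some some)
      = -(Fintype.card F : ℂ) ^ Fintype.card ι * ∑ y : GL ι F, g y := by
  classical
  let rows : Matrix (Option ι) (Option ι) F ≃ (Option ι → F) × (ι → Option ι → F) :=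
    of.symm.trans Equiv.piOptionEquivProd
  rw [sum_units_eq_sum_ite_isUnit g, sum_units_eq_sum_ite_isUnit
      fun x : Matrix (Option ι) (Option ι) F ↦ φ (x none none) * g (x.submatrix some some),
    ← sum_linearIndependent_apply_none_eq_zero g, mul_sum, ← rows.symm.sum_comp,
    Fintype.sum_prod_type, sum_comm]
  refine sum_congr rfl fun R _ ↦ ?_
  have isUnit_iff (v : Option ι → F) :
      IsUnit (rows.symm (v, R)) ↔ LinearIndependent F R ∧ v ∉ Submodule.span F (Set.range R) := by
    rw [← linearIndependent_rows_iff_isUnit, linearIndependent_option]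
    rfl
  have corner (v : Option ι → F) : rows.symm (v, R) none none = v none := rfl
  have minor (v : Option ι → F) :
      (rows.symm (v, R)).submatrix some some = of fun i j ↦ R i (some j) := rfl
  simp only [isUnit_iff, corner, minor]
  by_cases hR : LinearIndependent F R
  · simp only [hR, true_and]
    rw [← sum_filter, ← sum_mul, sum_addChar_apply_none_compl_span hφ hR]
    split_ifs <;> ring
  · simp [hR]

end FirstRow

lemma sum_GL_addChar_trace_toBlocks₁₁ {F : Type*} [Field F] [Fintype F] [DecidableEq F]
    {φ : AddChar F ℂ} (hφ : φ ≠ 1) (r k : ℕ) :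
    ∑ x : GL (Fin r ⊕ Fin k) F, φ (trace (x : Matrix (Fin r ⊕ Fin k) (Fin r ⊕ Fin k) F).toBlocks₁₁)
      = (-1) ^ r * (Fintype.card F : ℂ) ^ (r * k + r.choose 2) * Fintype.card (GL (Fin k) F) := by
  induction r with
  | zero =>
    simpa using
      Fintype.card_congr (GeneralLinearGroup.reindex (Equiv.emptySum (Fin 0) (Fin k))).toEquiv
  | succ r ih =>
    let e : Fin (r + 1) ⊕ Fin k ≃ Option (Fin r ⊕ Fin k) :=
      ((finSuccEquiv r).sumCongr (Equiv.refl _)).trans (Equiv.optionSumEquiv _ _)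
    have hexp : (r + 1) * k + (r + 1).choose 2 = (r * k + r.choose 2) + (r + k) := by
      rw [Nat.choose_succ_succ', Nat.choose_one_right]
      ring
    calc _ = ∑ y : GL (Option (Fin r ⊕ Fin k)) F,
          φ (y.val none none) * φ (trace (y.val.submatrix some some).toBlocks₁₁) := by
          refine Fintype.sum_equiv (GeneralLinearGroup.reindex e).toEquiv _ _ fun x ↦ ?_
          rw [← AddChar.map_add_eq_mul]
          simp [trace, toBlocks₁₁, Fin.sum_univ_succ, e, Equiv.optionSumEquiv]
      _ = -(Fintype.card F : ℂ) ^ (r + k) *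
            ∑ y : GL (Fin r ⊕ Fin k) F, φ (trace y.val.toBlocks₁₁) := by
          simpa using sum_GL_option_addChar_corner_mul hφ
            fun z : Matrix (Fin r ⊕ Fin k) (Fin r ⊕ Fin k) F ↦ φ (trace z.toBlocks₁₁)
      _ = _ := by
          rw [ih, hexp, pow_add]
          ring

lemma Nat.mul_eq_mul_sub_add_choose_two_add {r n : ℕ} (h : r ≤ n) :
    r * n = r * (n - r) + r.choose 2 + r * (r + 1) / 2 := by
  obtain ⟨k, rfl⟩ := Nat.exists_eq_add_of_le h
  have hsq : r.choose 2 * 2 + r = r * r := by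
    have := Nat.choose_mul_succ_eq r 2
    rw [Nat.choose_succ_succ', Nat.choose_one_right] at this
    rcases r with _ | s
    · rfl
    · rw [show s + 1 + 1 - 2 = s by omega] at this
      nlinarith
  have htri : r * (r + 1) / 2 = r + r.choose 2 := by
    have := Nat.choose_two_right (r + 1)
    rw [Nat.choose_succ_succ', Nat.choose_one_right, Nat.add_sub_cancel, mul_comm] at this
    exact this.symm
  rw [Nat.add_sub_cancel_left, htri]
  nlinarith

/-- If `a` has rank `r` then
`K_n(a,0) = ∑_{x ∈ GL_n} φ(tr(a x)) = (-1)^r q^{-r(r+1)/2} q^{rn} |GL_{n-r}(F_q)|`. -/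
theorem kloosterman_b_eq_zero {F : Type*} [Field F] [Fintype F] [DecidableEq F]
    {n : ℕ} (φ : AddChar F ℂ) (hφ : φ ≠ 1)
    (a : Matrix (Fin n) (Fin n) F) (r : ℕ) (hr : a.rank = r) :
    (∑ x : GL (Fin n) F, φ (Matrix.trace (a * (x : Matrix (Fin n) (Fin n) F)))) =
      (-1) ^ r * (Fintype.card F : ℂ) ^ (r * n) / (Fintype.card F : ℂ) ^ (r * (r + 1) / 2) *
        (Fintype.card (GL (Fin (n - r)) F) : ℂ) := by
  obtain ⟨V, U, e, hV, hU, hnormal⟩ := a.exists_rank_normal_form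
  have hq : (Fintype.card F : ℂ) ≠ 0 := Nat.cast_ne_zero.mpr Fintype.card_ne_zero
  rw [Nat.mul_eq_mul_sub_add_choose_two_add (hr ▸ a.rank_le_width), pow_add,
    mul_div_assoc, mul_div_cancel_right₀ _ (pow_ne_zero _ hq),
    ← sum_GL_trace_units_mul_mul φ a hV hU, hnormal, sum_GL_trace_submatrix_mul]
  subst hr
  simp only [trace_fromBlocks_one_zero_zero_zero_mul]
  rw [sum_GL_addChar_trace_toBlocks₁₁ hφ, Fintype.card_fin]
end

section
/- In GL_n over any field F, with P the stabilizer of the line spanned by the row vector e_n, U_k = {I + ∑_{j>k} u_j E_{k,j}}, and w_{(kn)} the permutation matrix of the transposition (k n), one has the disjoint decomposition GL_n(F) = ⊔_{k=1}^n U_k w_{(kn)} P, and for each k the multiplication map U_k × P → U_k w_{(kn)} P is a bijection. -/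
/-! Let `v` be the last row of `x⁻¹` and `w = w_{(k n)}`. Since `P` is a group, `x = u w p` with
`p ∈ P` says exactly that `p⁻¹ = x⁻¹ u w` has last row in `F e_n`, i.e. that `(v u)_j = 0` for
`j ≠ k`. For `u ∈ U_k` that entry is `v_j + v_k u_{kj}`, which forces `k` to be the first index with
`v_k ≠ 0` and `u_{kj} = -v_j / v_k` for `j > k`; conversely these choices work, and then
`p = w⁻¹ u⁻¹ x`. -/

open Matrix

/-- The permutation matrix `w_σ = ∑_j E_{σ(j), j}`. -/
def permMat {F : Type*} [Field F] {n : ℕ} [DecidableEq (Fin n)]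
    (σ : Equiv.Perm (Fin n)) : Matrix (Fin n) (Fin n) F :=
  Matrix.of fun i j => if σ j = i then 1 else 0

/-- The parabolic `P`: stabilizer of the line spanned by the last standard row vector,
i.e. invertible matrices whose last row is supported on the last coordinate. -/
def parabolicP (F : Type*) [Field F] (n : ℕ) : Set (GL (Fin (n + 1)) F) :=
  {g | ∀ j : Fin (n + 1), j ≠ Fin.last n →
    (g : Matrix (Fin (n + 1)) (Fin (n + 1)) F) (Fin.last n) j = 0}

/-- `U_k`: unipotent matrices `I + ∑_{j > k} u_j E_{k,j}`, i.e. with ones on the diagonal and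
the only possible off-diagonal nonzero entries in row `k`, at columns `> k`. -/
def rowUnipotent (F : Type*) [Field F] {n : ℕ} (k : Fin (n + 1)) :
    Set (GL (Fin (n + 1)) F) :=
  {u | (∀ i : Fin (n + 1), (u : Matrix (Fin (n + 1)) (Fin (n + 1)) F) i i = 1) ∧
    ∀ i j : Fin (n + 1), i ≠ j →
      (u : Matrix (Fin (n + 1)) (Fin (n + 1)) F) i j ≠ 0 → i = k ∧ k < j}

section Permutation

variable {F : Type*} [Field F] {m : ℕ}

lemma permMat_eq_permMatrix_inv (σ : Equiv.Perm (Fin m)) :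
    (permMat σ : Matrix (Fin m) (Fin m) F) = σ⁻¹.permMatrix F := by
  ext i j
  have h : σ.symm i = j ↔ σ j = i := σ.symm_apply_eq.trans eq_comm
  simp [permMat, PEquiv.toMatrix_apply, h]

lemma mul_permMat_apply (A : Matrix (Fin m) (Fin m) F) (σ : Equiv.Perm (Fin m)) (i j : Fin m) :
    (A * (permMat σ : Matrix (Fin m) (Fin m) F)) i j = A i (σ j) := by
  simp [permMat, Matrix.mul_apply]

def permGL (σ : Equiv.Perm (Fin m)) : GL (Fin m) F :=
  (permMatrixHom (n := Fin m) (R := F)).toHomUnits σ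

@[simp]
lemma coe_permGL (σ : Equiv.Perm (Fin m)) :
    ((permGL σ : GL (Fin m) F) : Matrix (Fin m) (Fin m) F) = permMat σ :=
  (permMat_eq_permMatrix_inv σ).symm

lemma coe_eq_mul_permMat_mul_iff {x u p : GL (Fin m) F} {σ : Equiv.Perm (Fin m)} :
    (x : Matrix (Fin m) (Fin m) F) =
        (u : Matrix (Fin m) (Fin m) F) * permMat σ * (p : Matrix (Fin m) (Fin m) F) ↔
      p = (permGL σ)⁻¹ * u⁻¹ * x := by
  rw [← coe_permGL, ← Units.val_mul, ← Units.val_mul, Units.val_inj, ← _root_.mul_inv_rev,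
    eq_inv_mul_iff_mul_eq, eq_comm]

end Permutation

lemma Matrix.GeneralLinearGroup.row_ne_zero {ι R : Type*} [Fintype ι] [DecidableEq ι] [CommRing R]
    [Nontrivial R] (g : GL ι R) (i : ι) : (g : Matrix ι ι R) i ≠ 0 :=
  fun h => g.det_ne_zero (det_eq_zero_of_row_eq_zero i (congr_fun h))

section RowUnipotent

variable {F : Type*} [Field F] {n : ℕ} {k : Fin (n + 1)}

lemma rowUnipotent_apply_eq_zero {u : GL (Fin (n + 1)) F} (hu : u ∈ rowUnipotent F k)
    {i j : Fin (n + 1)} (hij : i ≠ j) (h : ¬(i = k ∧ k < j)) :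
    (u : Matrix (Fin (n + 1)) (Fin (n + 1)) F) i j = 0 :=
  by_contra fun h' => h (hu.2 i j hij h')

lemma rowUnipotent_ext {u u' : GL (Fin (n + 1)) F} (hu : u ∈ rowUnipotent F k)
    (hu' : u' ∈ rowUnipotent F k)
    (h : ∀ j, k < j → (u : Matrix (Fin (n + 1)) (Fin (n + 1)) F) k j = (u' : Matrix _ _ F) k j) :
    u = u' := by
  refine Matrix.GeneralLinearGroup.ext fun i j => ?_
  by_cases hij : i = j
  · rw [hij, hu.1, hu'.1]
  by_cases hkj : i = k ∧ k < j
  · obtain ⟨rfl, hkj⟩ := hkj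
    exact h j hkj
  · rw [rowUnipotent_apply_eq_zero hu hij hkj, rowUnipotent_apply_eq_zero hu' hij hkj]

lemma rowUnipotent_apply_of_lt {u : GL (Fin (n + 1)) F} (hu : u ∈ rowUnipotent F k)
    {j : Fin (n + 1)} (hj : j < k) : (u : Matrix (Fin (n + 1)) (Fin (n + 1)) F) k j = 0 :=
  rowUnipotent_apply_eq_zero hu hj.ne' fun h => h.2.not_gt hj

lemma mul_apply_of_mem_rowUnipotent {u : GL (Fin (n + 1)) F} (hu : u ∈ rowUnipotent F k)
    (A : Matrix (Fin (n + 1)) (Fin (n + 1)) F) (i : Fin (n + 1)) {j : Fin (n + 1)} (hj : j ≠ k) :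
    (A * u) i j = A i j + A i k * (u : Matrix _ _ F) k j := by
  rw [Matrix.mul_apply, Fintype.sum_eq_add j k hj, hu.1, mul_one]
  rintro l ⟨hlj, hlk⟩
  rw [rowUnipotent_apply_eq_zero hu hlj (fun h => hlk h.1), mul_zero]

def rowUnipotentOfRow (k : Fin (n + 1)) (a : Fin (n + 1) → F) : GL (Fin (n + 1)) F :=
  Matrix.GeneralLinearGroup.mkOfDetNeZero (1 + of fun i j => if i = k ∧ k < j then a j else 0) <| by
    rw [det_of_isUpperTriangular]
    · refine Finset.prod_ne_zero_iff.2 fun i _ => ?_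
      rw [Matrix.add_apply, one_apply_eq, of_apply, if_neg fun h => h.2.ne' h.1, add_zero]
      exact one_ne_zero
    · intro i j (hji : j < i)
      rw [Matrix.add_apply, one_apply_ne hji.ne', of_apply, if_neg, add_zero]
      rintro ⟨rfl, hkj⟩
      exact (hkj.trans hji).false

lemma rowUnipotentOfRow_apply (k : Fin (n + 1)) (a : Fin (n + 1) → F) (i j : Fin (n + 1)) :
    (rowUnipotentOfRow k a : Matrix (Fin (n + 1)) (Fin (n + 1)) F) i j =
      (1 : Matrix (Fin (n + 1)) (Fin (n + 1)) F) i j + if i = k ∧ k < j then a j else 0 :=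
  rfl

lemma rowUnipotentOfRow_mem (k : Fin (n + 1)) (a : Fin (n + 1) → F) :
    rowUnipotentOfRow k a ∈ rowUnipotent F k := by
  refine ⟨fun i => ?_, fun i j hij h => ?_⟩
  · rw [rowUnipotentOfRow_apply, one_apply_eq, if_neg fun h => h.2.ne' h.1, add_zero]
  · rw [rowUnipotentOfRow_apply, one_apply_ne hij, zero_add] at h
    exact by_contra fun hc => h (if_neg hc)

lemma rowUnipotentOfRow_apply_of_lt {k j : Fin (n + 1)} (a : Fin (n + 1) → F) (hkj : k < j) :
    (rowUnipotentOfRow k a : Matrix (Fin (n + 1)) (Fin (n + 1)) F) k j = a j := by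
  rw [rowUnipotentOfRow_apply, one_apply_ne hkj.ne, if_pos ⟨rfl, hkj⟩, zero_add]

end RowUnipotent

section Parabolic

variable {F : Type*} [Field F] {n : ℕ}

lemma mul_apply_last_of_mem_parabolicP {p : GL (Fin (n + 1)) F} (hp : p ∈ parabolicP F n)
    (B : Matrix (Fin (n + 1)) (Fin (n + 1)) F) (j : Fin (n + 1)) :
    ((p : Matrix (Fin (n + 1)) (Fin (n + 1)) F) * B) (Fin.last n) j =
      (p : Matrix (Fin (n + 1)) (Fin (n + 1)) F) (Fin.last n) (Fin.last n) * B (Fin.last n) j := by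
  rw [Matrix.mul_apply, Fintype.sum_eq_single (Fin.last n)]
  intro l hl
  rw [hp l hl, zero_mul]

lemma inv_mem_parabolicP {p : GL (Fin (n + 1)) F} (hp : p ∈ parabolicP F n) :
    p⁻¹ ∈ parabolicP F n := by
  have h (j : Fin (n + 1)) := (mul_apply_last_of_mem_parabolicP hp _ j).symm.trans
    (congr_fun₂ p.mul_inv (Fin.last n) j)
  have hd := left_ne_zero_of_mul_eq_one ((h (Fin.last n)).trans (one_apply_eq _))
  exact fun j hj => (mul_eq_zero.1 ((h j).trans (one_apply_ne hj.symm))).resolve_left hd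

lemma inv_mem_parabolicP_iff {p : GL (Fin (n + 1)) F} :
    p⁻¹ ∈ parabolicP F n ↔ p ∈ parabolicP F n :=
  ⟨fun h => inv_inv p ▸ inv_mem_parabolicP h, inv_mem_parabolicP⟩

lemma inv_mul_inv_mul_mem_parabolicP_iff {x u : GL (Fin (n + 1)) F} {k : Fin (n + 1)}
    (hu : u ∈ rowUnipotent F k) :
    (permGL (Equiv.swap k (Fin.last n)))⁻¹ * u⁻¹ * x ∈ parabolicP F n ↔
      ∀ j ≠ k, (↑x⁻¹ : Matrix (Fin (n + 1)) (Fin (n + 1)) F) (Fin.last n) j +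
        (↑x⁻¹ : Matrix (Fin (n + 1)) (Fin (n + 1)) F) (Fin.last n) k *
          (u : Matrix (Fin (n + 1)) (Fin (n + 1)) F) k j = 0 := by
  rw [← inv_mem_parabolicP_iff]
  simp only [_root_.mul_inv_rev, inv_inv, parabolicP, Set.mem_ofPred_eq, Units.val_mul,
    coe_permGL, ← Matrix.mul_assoc, mul_permMat_apply]
  refine (Equiv.swap k (Fin.last n)).forall_congr fun j => ?_
  have hj : Equiv.swap k (Fin.last n) j ≠ k ↔ j ≠ Fin.last n := by
    rw [Ne, Equiv.swap_apply_eq_iff, Equiv.swap_apply_left]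
  rw [hj]
  exact imp_congr_right fun hj' => by rw [mul_apply_of_mem_rowUnipotent hu _ _ (hj.2 hj')]

end Parabolic

lemma forall_ne_add_mul_eq_zero_iff {ι F : Type*} [LinearOrder ι] [Field F] {v a : ι → F}
    {k : ι} (hv : v ≠ 0) (ha : ∀ j < k, a j = 0) :
    (∀ j ≠ k, v j + v k * a j = 0) ↔
      IsLeast {j | v j ≠ 0} k ∧ ∀ j, k < j → a j = -(v j / v k) := by
  constructor
  · intro h
    have hvk : v k ≠ 0 := fun hvk => hv <| funext fun j => by
      rcases eq_or_ne j k with rfl | hj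
      exacts [hvk, by simpa [hvk] using h j hj]
    refine ⟨⟨hvk, fun j hj => not_lt.1 fun hjk => hj ?_⟩, fun j hkj => ?_⟩
    · simpa [ha j hjk] using h j hjk.ne
    · field_simp
      linear_combination h j hkj.ne'
  · rintro ⟨⟨hvk, hleast⟩, hrow⟩ j hj
    rcases hj.lt_or_gt with hjk | hkj
    · rw [ha j hjk, mul_zero, add_zero]
      exact not_not.1 fun h => (hleast h).not_gt hjk
    · rw [hrow j hkj, mul_neg, mul_div_cancel₀ _ hvk, add_neg_cancel]

/-- Parabolic Bruhat decomposition: every `x ∈ GL_{n+1}(F)` has a unique expression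
`x = u · w_{(k n)} · p` with `u ∈ U_k`, `p ∈ P`; in particular
`GL_{n+1}(F) = ⊔_k U_k w_{(kn)} P` disjointly, with each multiplication map a bijection. -/
theorem parabolic_bruhat_decomposition {F : Type*} [Field F] {n : ℕ}
    (x : GL (Fin (n + 1)) F) :
    ∃! t : Fin (n + 1) × GL (Fin (n + 1)) F × GL (Fin (n + 1)) F,
      t.2.1 ∈ rowUnipotent F t.1 ∧ t.2.2 ∈ parabolicP F n ∧
        (x : Matrix (Fin (n + 1)) (Fin (n + 1)) F) =
          (t.2.1 : Matrix (Fin (n + 1)) (Fin (n + 1)) F) *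
            permMat (Equiv.swap t.1 (Fin.last n)) *
            (t.2.2 : Matrix (Fin (n + 1)) (Fin (n + 1)) F) := by
  set v := (↑x⁻¹ : Matrix (Fin (n + 1)) (Fin (n + 1)) F) (Fin.last n)
  have hv : v ≠ 0 := GeneralLinearGroup.row_ne_zero x⁻¹ (Fin.last n)
  have key {k : Fin (n + 1)} {u : GL (Fin (n + 1)) F} (hu : u ∈ rowUnipotent F k) :
      (permGL (Equiv.swap k (Fin.last n)))⁻¹ * u⁻¹ * x ∈ parabolicP F n ↔
        IsLeast {j | v j ≠ 0} k ∧ ∀ j, k < j → (u : Matrix _ _ F) k j = -(v j / v k) :=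
    (inv_mul_inv_mul_mem_parabolicP_iff hu).trans <|
      forall_ne_add_mul_eq_zero_iff hv fun _ => rowUnipotent_apply_of_lt hu
  obtain ⟨k, hk⟩ : ∃ k, IsLeast {j | v j ≠ 0} k := ⟨_, isLeast_csInf (Function.ne_iff.1 hv)⟩
  obtain ⟨u, hu, hu_row⟩ : ∃ u ∈ rowUnipotent F k,
      ∀ j, k < j → (u : Matrix (Fin (n + 1)) (Fin (n + 1)) F) k j = -(v j / v k) :=
    ⟨_, rowUnipotentOfRow_mem k _, fun _ => rowUnipotentOfRow_apply_of_lt _⟩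
  refine ⟨(k, u, _), ⟨hu, (key hu).2 ⟨hk, hu_row⟩, coe_eq_mul_permMat_mul_iff.2 rfl⟩, ?_⟩
  rintro ⟨k', u', p'⟩ ⟨hu', hp', hx'⟩
  dsimp only at hu' hp' hx'
  rw [coe_eq_mul_permMat_mul_iff] at hx'
  obtain ⟨hk', hu'_row⟩ := (key hu').1 (hx' ▸ hp')
  obtain rfl := hk'.unique hk
  obtain rfl := rowUnipotent_ext hu' hu fun j hj => (hu'_row j hj).trans (hu_row j hj).symm
  rw [hx']
end

section
/- Let e ≤ ⌊n/2⌋ and let w_e ∈ S_n be the involution with w_e(j) = n−j+1 for j ≤ e (and its mirror) and w_e(j) = j for e < j ≤ n−e. Define N(w) = |{(i,j) : 1 ≤ i < j ≤ n, w(j) < w(i) ≤ j}|. Then: (1) among involutions w that are products of exactly e disjoint transpositions, N(w) ≤ N(w_e) with equality only for w = w_e; (2) N(w_e) = e(n−e); in particular the maximum of N over all involutions in S_n is (n² − δ(n))/4 with δ(n) = n mod 2. -/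
/-- `N(w) = #{(i,j) : i < j, w(j) < w(i) ≤ j}`. -/
def permN {n : ℕ} (w : Equiv.Perm (Fin n)) : ℕ :=
  (Finset.univ.filter fun p : Fin n × Fin n =>
    p.1 < p.2 ∧ w p.2 < w p.1 ∧ w p.1 ≤ p.2).card

namespace AuxPermN

open Finset Equiv

variable {n : ℕ}

private def Bs (w : Perm (Fin n)) : Finset (Fin n) := univ.filter fun x => w x < x
private def As (w : Perm (Fin n)) : Finset (Fin n) := univ.filter fun x => x < w x
private def Cs (w : Perm (Fin n)) : Finset (Fin n) := univ.filter fun x => w x ≤ x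
private def Ss (w : Perm (Fin n)) : Finset (Fin n × Fin n) :=
  univ.filter fun p => p.1 < p.2 ∧ w p.2 < w p.1 ∧ w p.1 ≤ p.2
private def ff (w : Perm (Fin n)) (p : Fin n × Fin n) : Fin n × Fin n :=
  if w p.1 < p.1 then p else (p.2, w p.1)

private lemma permN_eq_Ss (w : Perm (Fin n)) : permN w = (Ss w).card := rfl

private lemma ff_mapsTo (w : Perm (Fin n)) (hw : ∀ x, w (w x) = x) :
    ∀ p ∈ Ss w, ff w p ∈ Bs w ×ˢ Cs w := by
  rintro ⟨i, j⟩ hp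
  simp only [Ss, mem_filter, mem_univ, true_and] at hp
  obtain ⟨h1, h2, h3⟩ := hp
  unfold ff
  split_ifs with h
  · simp only [mem_product, Bs, Cs, mem_filter, mem_univ, true_and]
    exact ⟨h, le_of_lt (lt_trans h2 (lt_of_lt_of_le (lt_of_lt_of_le h (le_of_lt h1)) le_rfl))⟩
  · simp only [mem_product, Bs, Cs, mem_filter, mem_univ, true_and]
    refine ⟨lt_of_lt_of_le h2 h3, ?_⟩
    rw [hw i]
    exact le_of_not_gt h

private lemma ff_injOn (w : Perm (Fin n)) :
    Set.InjOn (ff w) (Ss w) := by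
  rintro ⟨i1, j1⟩ hp ⟨i2, j2⟩ hq h
  simp only [Ss, coe_filter, Set.mem_setOf_eq, mem_univ, true_and] at hp hq
  unfold ff at h
  split_ifs at h with h1 h2 h2
  · exact h
  · -- (i1,j1) = (j2, w i2) with w i1 < i1, ¬ w i2 < i2
    exfalso
    have e1 : i1 = j2 := congrArg Prod.fst h
    have e2 : j1 = w i2 := congrArg Prod.snd h
    have := hq.2.2  -- w i2 ≤ j2
    rw [← e2, ← e1] at this
    exact absurd (lt_of_lt_of_le hp.1 this) (lt_irrefl _)
  · exfalso
    have e1 : j1 = i2 := congrArg Prod.fst h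
    have e2 : w i1 = j2 := congrArg Prod.snd h
    have := hp.2.2  -- w i1 ≤ j1
    rw [e2, e1] at this
    exact absurd (lt_of_le_of_lt this hq.1) (lt_irrefl _)
  · have e1 : j1 = j2 := congrArg Prod.fst h
    have e2 : w i1 = w i2 := congrArg Prod.snd h
    have : i1 = i2 := w.injective e2
    rw [this, e1]

private lemma Bs_eq_image (w : Perm (Fin n)) (hw : ∀ x, w (w x) = x) :
    Bs w = (As w).image w := by
  ext b
  simp only [Bs, As, mem_filter, mem_univ, true_and, mem_image]
  constructor
  · intro hb
    exact ⟨w b, by rw [hw b]; exact hb, hw b⟩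
  · rintro ⟨a, ha, rfl⟩
    rw [hw a]; exact ha

private lemma cardA_eq_cardB (w : Perm (Fin n)) (hw : ∀ x, w (w x) = x) :
    (As w).card = (Bs w).card := by
  rw [Bs_eq_image w hw, card_image_of_injective _ w.injective]

private lemma cardC (w : Perm (Fin n)) (hw : ∀ x, w (w x) = x) :
    (Cs w).card = n - (Bs w).card := by
  have h1 : (Cs w) = univ \ (As w) := by
    ext x; simp [Cs, As, not_lt]
  rw [h1, card_sdiff_of_subset (subset_univ _), card_univ, Fintype.card_fin,
    cardA_eq_cardB w hw]

private lemma moved_eq (w : Perm (Fin n)) :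
    univ.filter (fun i : Fin n => w i ≠ i) = As w ∪ Bs w := by
  ext x
  simp only [mem_filter, mem_univ, true_and, mem_union, As, Bs]
  constructor
  · intro h; rcases lt_or_gt_of_ne h with h' | h'
    · right; exact h'
    · left; exact h'
  · rintro (h | h) <;> exact fun hh => by rw [hh] at h; exact lt_irrefl _ h

private lemma cardB_of_moved (w : Perm (Fin n)) (hw : ∀ x, w (w x) = x) {e : ℕ}
    (hm : (univ.filter fun i : Fin n => w i ≠ i).card = 2 * e) :
    (Bs w).card = e := by
  have hd : Disjoint (As w) (Bs w) := by
    rw [Finset.disjoint_left]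
    intro x hx hx'
    simp only [As, Bs, mem_filter] at hx hx'
    exact absurd (lt_trans hx.2 hx'.2) (lt_irrefl _)
  have := card_union_of_disjoint hd
  rw [← moved_eq w, hm, cardA_eq_cardB w hw] at this
  omega

private lemma two_cardB_le (w : Perm (Fin n)) (hw : ∀ x, w (w x) = x) :
    2 * (Bs w).card ≤ n := by
  have hd : Disjoint (As w) (Bs w) := by
    rw [Finset.disjoint_left]
    intro x hx hx'
    simp only [As, Bs, mem_filter] at hx hx'
    exact absurd (lt_trans hx.2 hx'.2) (lt_irrefl _)
  have h1 := card_union_of_disjoint hd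
  have h2 : (As w ∪ Bs w).card ≤ n := by
    simpa using card_le_card (subset_univ (As w ∪ Bs w))
  rw [cardA_eq_cardB w hw] at h1
  omega

private lemma permN_le (w : Perm (Fin n)) (hw : ∀ x, w (w x) = x) :
    permN w ≤ (Bs w).card * (n - (Bs w).card) := by
  rw [permN_eq_Ss]
  calc (Ss w).card ≤ (Bs w ×ˢ Cs w).card :=
        card_le_card_of_injOn (ff w) (ff_mapsTo w hw) (ff_injOn w)
    _ = (Bs w).card * (n - (Bs w).card) := by rw [card_product, cardC w hw]

section we
variable {e : ℕ} (he : 2 * e ≤ n) (w : Perm (Fin n))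
  (hwe : ∀ j : Fin n, w j = if (j : ℕ) < e ∨ n - e ≤ (j : ℕ) then j.rev else j)

include he hwe

private lemma we_invol : ∀ x : Fin n, w (w x) = x := by
  intro x
  have hx := x.isLt
  rcases lt_or_ge (x : ℕ) e with h | h
  · have h1 : w x = x.rev := by rw [hwe x]; simp [h]
    have h2 : (x.rev : ℕ) = n - 1 - x := by rw [Fin.val_rev]; omega
    have h3 : n - e ≤ (x.rev : ℕ) := by omega
    rw [h1, hwe x.rev, if_pos (Or.inr h3), Fin.rev_rev]
  · rcases lt_or_ge (x : ℕ) (n - e) with h' | h'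
    · have h1 : w x = x := by rw [hwe x]; simp; omega
      rw [h1, h1]
    · have h1 : w x = x.rev := by rw [hwe x]; simp [h']
      have h2 : (x.rev : ℕ) = n - 1 - x := by rw [Fin.val_rev]; omega
      have h3 : (x.rev : ℕ) < e := by omega
      rw [h1, hwe x.rev, if_pos (Or.inl h3), Fin.rev_rev]

private lemma mem_Bs_we {x : Fin n} : x ∈ Bs w ↔ n - e ≤ (x : ℕ) := by
  have hx := x.isLt
  have hrev : (x.rev : ℕ) = n - 1 - x := by rw [Fin.val_rev]; omega
  simp only [Bs, mem_filter, mem_univ, true_and]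
  rw [hwe x]
  split_ifs with h
  · rw [Fin.lt_def, hrev]
    omega
  · rw [Fin.lt_iff_val_lt_val]
    omega

private lemma mem_Cs_we {x : Fin n} : x ∈ Cs w ↔ e ≤ (x : ℕ) := by
  have hx := x.isLt
  have hrev : (x.rev : ℕ) = n - 1 - x := by rw [Fin.val_rev]; omega
  simp only [Cs, mem_filter, mem_univ, true_and]
  rw [hwe x]
  split_ifs with h
  · rw [Fin.le_def, hrev]
    omega
  · rw [Fin.le_def]
    omega

private lemma cardBs_we : (Bs w).card = e := by
  rcases Nat.eq_zero_or_pos n with rfl | hn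
  · have he0 : e = 0 := by omega
    subst he0
    simp [Bs]
  · have hen : e < n := by omega
    have : As w = Finset.Iio (⟨e, hen⟩ : Fin n) := by
      ext x
      have hx := x.isLt
      have hrev : (x.rev : ℕ) = n - 1 - x := by rw [Fin.val_rev]; omega
      simp only [As, mem_filter, mem_univ, true_and, Finset.mem_Iio, Fin.lt_def]
      rw [hwe x]
      split_ifs with h
      · omega
      · omega
    rw [← cardA_eq_cardB w (we_invol he w hwe), this, Fin.card_Iio]

end we

private def gg (e : ℕ) (q : Fin n × Fin n) : Fin n × Fin n :=
  if (q.2 : ℕ) < n - e then (q.2, q.1)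
  else if q.2 < q.1 then (q.2.rev, q.1)
  else if q.1 < q.2 then q
  else (q.1.rev, q.1)

section we2
variable {e : ℕ} (he : 2 * e ≤ n) (w : Perm (Fin n))
  (hwe : ∀ j : Fin n, w j = if (j : ℕ) < e ∨ n - e ≤ (j : ℕ) then j.rev else j)

include he hwe

private lemma gg_spec : ∀ q ∈ Bs w ×ˢ Cs w, gg e q ∈ Ss w ∧ ff w (gg e q) = q := by
  rintro ⟨x, y⟩ hq
  rw [mem_product] at hq
  have hx : n - e ≤ (x : ℕ) := (mem_Bs_we he w hwe).1 hq.1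
  have hy : e ≤ (y : ℕ) := (mem_Cs_we he w hwe).1 hq.2
  have hxv := x.isLt
  have hyv := y.isLt
  have hxrev : (x.rev : ℕ) = n - 1 - x := by rw [Fin.val_rev]; omega
  have hyrev : (y.rev : ℕ) = n - 1 - y := by rw [Fin.val_rev]; omega
  have he1 : 1 ≤ e := by omega
  have hwx : w x = x.rev := by rw [hwe x, if_pos (Or.inr hx)]
  have hwxrev : w x.rev = x := by
    rw [hwe x.rev, if_pos (Or.inl (by omega)), Fin.rev_rev]
  have hmem : ∀ a b : Fin n, a < b → w b < w a → w a ≤ b → (a, b) ∈ Ss w := by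
    intro a b h1 h2 h3
    simp only [Ss, mem_filter, mem_univ, true_and]
    exact ⟨h1, h2, h3⟩
  rcases lt_or_ge (y : ℕ) (n - e) with hc1 | hc1
  · -- y fixed, p = (y, x)
    have hwy : w y = y := by rw [hwe y, if_neg (by omega)]
    have hg : gg e (x, y) = (y, x) := by simp only [gg, if_pos hc1]
    rw [hg]
    refine ⟨hmem y x (by rw [Fin.lt_def]; omega) ?_ ?_, ?_⟩
    · rw [hwy, hwx, Fin.lt_def]; omega
    · rw [hwy, Fin.le_def]; omega
    · show (if w y < y then ((y : Fin n), x) else (x, w y)) = (x, y)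
      rw [hwy, if_neg (lt_irrefl y)]
  · rcases lt_or_ge (y : ℕ) (x : ℕ) with hc2 | hc2
    · -- y in B, y < x : p = (y.rev, x)
      have hwyrev : w y.rev = y := by
        rw [hwe y.rev, if_pos (Or.inl (by omega)), Fin.rev_rev]
      have hg : gg e (x, y) = (y.rev, x) := by
        simp only [gg, if_neg (by omega : ¬ ((y:ℕ) < n - e)),
          if_pos (show y < x by rw [Fin.lt_def]; omega)]
      rw [hg]
      refine ⟨hmem y.rev x (by rw [Fin.lt_def]; omega) ?_ ?_, ?_⟩
      · rw [hwyrev, hwx, Fin.lt_def]; omega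
      · rw [hwyrev, Fin.le_def]; omega
      · show (if w y.rev < y.rev then (y.rev, x) else (x, w y.rev)) = (x, y)
        rw [hwyrev, if_neg (by rw [Fin.lt_def]; omega)]
    · rcases lt_or_ge (x : ℕ) (y : ℕ) with hc3 | hc3
      · -- y in B, x < y : p = (x, y)
        have hwy : w y = y.rev := by rw [hwe y, if_pos (Or.inr (by omega))]
        have hg : gg e (x, y) = (x, y) := by
          simp only [gg, if_neg (by omega : ¬ ((y:ℕ) < n - e)),
            if_neg (show ¬ (y < x) by rw [Fin.lt_def]; omega),
            if_pos (show x < y by rw [Fin.lt_def]; omega)]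
        rw [hg]
        refine ⟨hmem x y (by rw [Fin.lt_def]; omega) ?_ ?_, ?_⟩
        · rw [hwy, hwx, Fin.lt_def]; omega
        · rw [hwx, Fin.le_def]; omega
        · show (if w x < x then ((x : Fin n), y) else (y, w x)) = (x, y)
          rw [if_pos (by rw [hwx, Fin.lt_def]; omega)]
      · -- x = y : p = (x.rev, x)
        have hxy' : x = y := Fin.ext (by omega)
        have hg : gg e (x, y) = (x.rev, x) := by
          simp only [gg, if_neg (by omega : ¬ ((y:ℕ) < n - e)),
            if_neg (show ¬ (y < x) by rw [Fin.lt_def]; omega),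
            if_neg (show ¬ (x < y) by rw [Fin.lt_def]; omega)]
        rw [hg]
        refine ⟨hmem x.rev x (by rw [Fin.lt_def]; omega) ?_ ?_, ?_⟩
        · rw [hwxrev, hwx, Fin.lt_def]; omega
        · rw [hwxrev]
        · show (if w x.rev < x.rev then (x.rev, x) else (x, w x.rev)) = (x, y)
          rw [hwxrev, if_neg (by rw [Fin.lt_def]; omega), hxy']

private lemma permN_we : permN w = e * (n - e) := by
  have hinv := we_invol he w hwe
  have hB := cardBs_we he w hwe
  refine le_antisymm ?_ ?_
  · have h := permN_le w hinv
    rwa [hB] at h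
  · have h1 : (Bs w ×ˢ Cs w).card ≤ (Ss w).card := by
      apply card_le_card_of_injOn (gg e)
      · intro q hq
        exact (gg_spec he w hwe q hq).1
      · intro q1 h1 q2 h2 heq
        have e1 := (gg_spec he w hwe q1 h1).2
        have e2 := (gg_spec he w hwe q2 h2).2
        rw [← e1, ← e2, heq]
    rw [card_product, hB, cardC w hinv, hB] at h1
    rw [permN_eq_Ss]
    exact h1

end we2

private lemma uniq {e : ℕ} (w : Perm (Fin n)) (hw : ∀ x, w (w x) = x)
    (hB : (Bs w).card = e) (hN : permN w = e * (n - e)) :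
    ∀ j : Fin n, w j = if (j : ℕ) < e ∨ n - e ≤ (j : ℕ) then j.rev else j := by
  have hA : (As w).card = e := by rw [cardA_eq_cardB w hw, hB]
  have hC : (Cs w).card = n - e := by rw [cardC w hw, hB]
  have hSs : ∀ p : Fin n × Fin n, p ∈ Ss w ↔ p.1 < p.2 ∧ w p.2 < w p.1 ∧ w p.1 ≤ p.2 := by
    intro p; simp [Ss]
  have himg : (Ss w).image (ff w) = Bs w ×ˢ Cs w := by
    apply eq_of_subset_of_card_le
    · intro q hq
      rcases mem_image.1 hq with ⟨p, hp, rfl⟩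
      exact ff_mapsTo w hw p hp
    · rw [card_image_of_injOn (ff_injOn w), ← permN_eq_Ss, hN, card_product, hB, hC]
  have hsurj : ∀ x ∈ Bs w, ∀ y ∈ Cs w, ∃ p ∈ Ss w, ff w p = (x, y) := by
    intro x hx y hy
    have : (x, y) ∈ (Ss w).image (ff w) := by rw [himg]; exact mem_product.2 ⟨hx, hy⟩
    exact mem_image.1 this
  -- P1
  have P1 : ∀ j ∈ Bs w, ∀ y : Fin n, w y = y → w j < y ∧ y < j := by
    intro j hj y hy
    have hyC : y ∈ Cs w := by simp [Cs, hy]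
    obtain ⟨p, hp, hfp⟩ := hsurj j hj y hyC
    rw [hSs] at hp
    unfold ff at hfp
    split_ifs at hfp with h
    · exfalso
      have e1 : p.1 = j := congrArg Prod.fst hfp
      have e2 : p.2 = y := congrArg Prod.snd hfp
      rw [e1, e2, hy] at hp
      exact absurd (lt_of_lt_of_le hp.2.1 hp.2.2) (lt_irrefl _)
    · have e1 : p.2 = j := congrArg Prod.fst hfp
      have e2 : w p.1 = y := congrArg Prod.snd hfp
      have e3 : p.1 = y := by rw [← hw p.1, e2, hy]
      rw [e1, e3, hy] at hp
      exact ⟨hp.2.1, hp.1⟩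
  -- P2
  have P2 : ∀ x ∈ Bs w, ∀ y ∈ Bs w, y < x → w x < y := by
    intro x hx y hy hlt
    have hyC : y ∈ Cs w := by
      simp only [Bs, Cs, mem_filter, mem_univ, true_and] at hy ⊢
      exact le_of_lt hy
    obtain ⟨p, hp, hfp⟩ := hsurj x hx y hyC
    rw [hSs] at hp
    unfold ff at hfp
    split_ifs at hfp with h
    · exfalso
      have e1 : p.1 = x := congrArg Prod.fst hfp
      have e2 : p.2 = y := congrArg Prod.snd hfp
      rw [e1, e2] at hp
      exact absurd (lt_trans hp.1 hlt) (lt_irrefl _)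
    · have e1 : p.2 = x := congrArg Prod.fst hfp
      have e2 : w p.1 = y := congrArg Prod.snd hfp
      rw [e1, e2] at hp
      exact hp.2.1
  -- P3
  have P3 : ∀ x ∈ Bs w, ∀ y ∈ Bs w, y < x → w x < w y := by
    intro x hx y hy hlt
    have hxC : x ∈ Cs w := by
      simp only [Bs, Cs, mem_filter, mem_univ, true_and] at hx ⊢
      exact le_of_lt hx
    obtain ⟨p, hp, hfp⟩ := hsurj y hy x hxC
    rw [hSs] at hp
    unfold ff at hfp
    split_ifs at hfp with h
    · have e1 : p.1 = y := congrArg Prod.fst hfp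
      have e2 : p.2 = x := congrArg Prod.snd hfp
      rw [e1, e2] at hp
      exact hp.2.1
    · exfalso
      have e1 : p.2 = y := congrArg Prod.fst hfp
      have e2 : w p.1 = x := congrArg Prod.snd hfp
      rw [e1, e2] at hp
      exact absurd (lt_of_le_of_lt hp.2.2 hlt) (lt_irrefl _)
  -- every element of As is below every element of Cs
  have hAC : ∀ a ∈ As w, ∀ y ∈ Cs w, a < y := by
    intro a ha y hy
    have haA : a < w a := by
      simpa [As] using ha
    have hbB : w a ∈ Bs w := by
      simp only [Bs, mem_filter, mem_univ, true_and]
      rw [hw a]; exact haA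
    have hyC : w y ≤ y := by simpa [Cs] using hy
    rcases eq_or_lt_of_le hyC with heq | hlt
    · have := (P1 (w a) hbB y heq).1
      rwa [hw a] at this
    · have hyB : y ∈ Bs w := by
        simp only [Bs, mem_filter, mem_univ, true_and]; exact hlt
      rcases lt_trichotomy y (w a) with h' | h' | h'
      · have := P2 (w a) hbB y hyB h'
        rwa [hw a] at this
      · rw [h']; exact haA
      · exact lt_trans haA h'
  have hAe : ∀ a ∈ As w, (a : ℕ) < e := by
    intro a ha
    have hsub : Cs w ⊆ Finset.Ioi a := fun y hy => Finset.mem_Ioi.2 (hAC a ha y hy)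
    have := card_le_card hsub
    rw [hC, Fin.card_Ioi] at this
    have := a.isLt
    omega
  have hCe : ∀ y ∈ Cs w, e ≤ (y : ℕ) := by
    intro y hy
    have hsub : As w ⊆ Finset.Iio y := fun a ha => Finset.mem_Iio.2 (hAC a ha y hy)
    have := card_le_card hsub
    rwa [hA, Fin.card_Iio] at this
  -- every non-member of Bs is below every member of Bs
  have hlt : ∀ b ∈ Bs w, ∀ z, z ∉ Bs w → z < b := by
    intro b hb z hz
    have hzC : z ≤ w z := by
      simp only [Bs, mem_filter, mem_univ, true_and, not_lt] at hz
      exact hz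
    rcases eq_or_lt_of_le hzC with heq | hlt'
    · exact (P1 b hb z heq.symm).2
    · have hzA : z ∈ As w := by
        simp only [As, mem_filter, mem_univ, true_and]; exact hlt'
      have h1 : (z : ℕ) < e := hAe z hzA
      have h2 : e ≤ (b : ℕ) := hCe b (by
        simp only [Bs, Cs, mem_filter, mem_univ, true_and] at hb ⊢
        exact le_of_lt hb)
      rw [Fin.lt_def]; omega
  have hBn : ∀ b ∈ Bs w, n - e ≤ (b : ℕ) := by
    intro b hb
    have hsub : univ \ Bs w ⊆ Finset.Iio b := by
      intro z hz
      rw [mem_sdiff] at hz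
      exact Finset.mem_Iio.2 (hlt b hb z hz.2)
    have h := card_le_card hsub
    rw [card_sdiff_of_subset (subset_univ _), card_univ, Fintype.card_fin, hB, Fin.card_Iio] at h
    omega
  have hnB : ∀ z, z ∉ Bs w → (z : ℕ) < n - e := by
    intro z hz
    have hsub : Bs w ⊆ Finset.Ioi z := fun b hb => Finset.mem_Ioi.2 (hlt b hb z hz)
    have h := card_le_card hsub
    rw [hB, Fin.card_Ioi] at h
    have := z.isLt
    omega
  -- on Bs, w is the reversal
  have hwB : ∀ b ∈ Bs w, w b = Fin.rev b := by
    intro b hb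
    have hbn : n - e ≤ (b : ℕ) := hBn b hb
    have hbv := b.isLt
    -- upper part
    have h1 : Finset.Ioi b ⊆ Bs w := by
      intro y hy
      by_contra hyn
      have := hnB y hyn
      rw [Finset.mem_Ioi, Fin.lt_def] at hy
      omega
    have him1 : (Finset.Ioi b).image w ⊆ Finset.Iio (w b) := by
      intro v hv
      rcases mem_image.1 hv with ⟨y, hy, rfl⟩
      exact Finset.mem_Iio.2 (P3 y (h1 hy) b hb (Finset.mem_Ioi.1 hy))
    have hcard1 := card_le_card him1
    rw [card_image_of_injective _ w.injective, Fin.card_Ioi, Fin.card_Iio] at hcard1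
    -- lower part
    have hwbA : w b ∈ As w := by
      simp only [As, mem_filter, mem_univ, true_and]
      rw [hw b]
      simpa [Bs] using hb
    have h2 : Finset.Iio (w b) ⊆ As w := by
      intro a ha
      rw [Finset.mem_Iio] at ha
      by_contra han
      have h3 : e ≤ (a : ℕ) := hCe a (by
        simp only [As, Cs, mem_filter, mem_univ, true_and, not_lt] at han ⊢
        exact han)
      have h4 : (w b : ℕ) < e := hAe (w b) hwbA
      rw [Fin.lt_def] at ha
      omega
    have him2 : (Finset.Iio (w b)).image w ⊆ Finset.Ioi b := by
      intro v hv
      rcases mem_image.1 hv with ⟨a, ha, rfl⟩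
      have haA := h2 ha
      rw [Finset.mem_Iio] at ha
      have hwaB : w a ∈ Bs w := by
        simp only [Bs, mem_filter, mem_univ, true_and]
        rw [hw a]
        simpa [As] using haA
      rw [Finset.mem_Ioi]
      rcases lt_trichotomy b (w a) with h' | h' | h'
      · exact h'
      · exfalso
        have : a = w b := by rw [← hw a, h']
        rw [this] at ha
        exact lt_irrefl _ ha
      · exfalso
        have := P3 b hb (w a) hwaB h'
        rw [hw a] at this
        exact absurd (lt_trans this ha) (lt_irrefl _)
    have hcard2 := card_le_card him2
    rw [card_image_of_injective _ w.injective, Fin.card_Ioi, Fin.card_Iio] at hcard2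
    have hwbv := (w b).isLt
    apply Fin.ext
    rw [Fin.val_rev]
    omega
  -- conclusion
  intro j
  rcases lt_trichotomy (w j) j with hj | hj | hj
  · have hjB : j ∈ Bs w := by simp only [Bs, mem_filter, mem_univ, true_and]; exact hj
    rw [hwB j hjB, if_pos (Or.inr (hBn j hjB))]
  · have hjnA : ¬ ((j : ℕ) < e) := by
      have : j ∈ Cs w := by simp only [Cs, mem_filter, mem_univ, true_and]; exact le_of_eq hj
      have := hCe j this
      omega
    have hjnB : ¬ (n - e ≤ (j : ℕ)) := by
      have : j ∉ Bs w := by simp [Bs, hj]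
      have := hnB j this
      omega
    rw [if_neg (by tauto), hj]
  · have hjA : j ∈ As w := by simp only [As, mem_filter, mem_univ, true_and]; exact hj
    have hbB : w j ∈ Bs w := by
      simp only [Bs, mem_filter, mem_univ, true_and]
      rw [hw j]; exact hj
    have h1 : w (w j) = Fin.rev (w j) := hwB (w j) hbB
    rw [hw j] at h1
    have h2 : w j = Fin.rev j := by
      have h3 := congrArg Fin.rev h1
      rw [Fin.rev_rev] at h3
      exact h3.symm
    rw [h2, if_pos (Or.inl (hAe j hjA))]

private lemma arith_eq (m : ℕ) : (m / 2) * (m - m / 2) = (m ^ 2 - m % 2) / 4 := by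
  rcases Nat.even_or_odd m with ⟨q, hq⟩ | ⟨q, hq⟩
  · have h1 : m / 2 = q := by omega
    have h2 : m - q = q := by omega
    have h3 : m % 2 = 0 := by omega
    have h4 : m ^ 2 = q * q * 4 := by rw [hq]; ring
    rw [h1, h2, h3, h4, Nat.sub_zero, Nat.mul_div_cancel _ (by norm_num)]
  · have h1 : m / 2 = q := by omega
    have h2 : m - q = q + 1 := by omega
    have h3 : m % 2 = 1 := by omega
    have h4 : m ^ 2 = q * (q + 1) * 4 + 1 := by rw [hq]; ring
    rw [h1, h2, h3, h4, Nat.add_sub_cancel, Nat.mul_div_cancel _ (by norm_num)]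

private lemma arith_le {k m : ℕ} (h : 2 * k ≤ m) : k * (m - k) ≤ (m ^ 2 - m % 2) / 4 := by
  rw [← arith_eq m]
  have hk : k ≤ m / 2 := by omega
  have hqb : m / 2 ≤ m - m / 2 := by omega
  have h1 : m - k = (m - m / 2) + (m / 2 - k) := by omega
  have h2 : m / 2 = k + (m / 2 - k) := by omega
  calc k * (m - k) = k * (m - m / 2) + k * (m / 2 - k) := by rw [h1]; ring
    _ ≤ k * (m - m / 2) + (m / 2 - k) * (m - m / 2) := by
        have : k * (m / 2 - k) ≤ (m / 2 - k) * (m - m / 2) := by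
          rw [mul_comm]
          exact Nat.mul_le_mul_left _ (le_trans hk hqb)
        omega
    _ = (k + (m / 2 - k)) * (m - m / 2) := by ring
    _ = (m / 2) * (m - m / 2) := by rw [← h2]

theorem permN_involution_max' {n e : ℕ} (he : 2 * e ≤ n) (we : Equiv.Perm (Fin n))
    (hwe : ∀ j : Fin n, we j = if (j : ℕ) < e ∨ n - e ≤ (j : ℕ) then j.rev else j) :
    (∀ w : Equiv.Perm (Fin n), w ^ 2 = 1 →
        (Finset.univ.filter fun i : Fin n => w i ≠ i).card = 2 * e →
          permN w ≤ permN we ∧ (permN w = permN we → w = we)) ∧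
      permN we = e * (n - e) ∧
      IsGreatest {m | ∃ w : Equiv.Perm (Fin n), w ^ 2 = 1 ∧ permN w = m}
        ((n ^ 2 - n % 2) / 4) := by
  have hval : permN we = e * (n - e) := permN_we he we hwe
  have inv_of_sq : ∀ w : Equiv.Perm (Fin n), w ^ 2 = 1 → ∀ x, w (w x) = x := by
    intro w hw2 x
    rw [← Perm.mul_apply, ← sq, hw2, Perm.one_apply]
  refine ⟨?_, hval, ?_, ?_⟩
  · intro w hw2 hm
    have hinv := inv_of_sq w hw2
    have hBcard : (Bs w).card = e := cardB_of_moved w hinv hm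
    constructor
    · have h := permN_le w hinv
      rw [hBcard] at h
      rw [hval]
      exact h
    · intro hNeq
      have hN : permN w = e * (n - e) := by rw [hNeq, hval]
      have hu := uniq w hinv hBcard hN
      exact Equiv.ext fun j => by rw [hu j, ← hwe j]
  · -- membership
    refine ⟨Fin.revPerm, ?_, ?_⟩
    · ext x
      simp [sq]
    · have he2 : 2 * (n / 2) ≤ n := by omega
      have hrev : ∀ j : Fin n, Fin.revPerm j =
          if (j : ℕ) < n / 2 ∨ n - n / 2 ≤ (j : ℕ) then j.rev else j := by
        intro j
        have hj := j.isLt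
        split_ifs with h
        · rfl
        · show j.rev = j
          apply Fin.ext
          rw [Fin.val_rev]
          omega
      rw [permN_we he2 Fin.revPerm hrev]
      exact arith_eq n
  · rintro m ⟨w, hw2, rfl⟩
    have hinv := inv_of_sq w hw2
    exact le_trans (permN_le w hinv) (arith_le (two_cardB_le w hinv))

end AuxPermN

/-- Among involutions with exactly `e` two-cycles, `N(w)` is maximized uniquely at the
involution `w_e` pairing `j ↔ n+1-j` for the first `e` and last `e` indices, with
`N(w_e) = e(n-e)`; and the overall maximum of `N` over involutions is `(n² - δ(n))/4`. -/
theorem permN_involution_max {n e : ℕ} (he : 2 * e ≤ n) (we : Equiv.Perm (Fin n))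
    (hwe : ∀ j : Fin n, we j = if (j : ℕ) < e ∨ n - e ≤ (j : ℕ) then j.rev else j) :
    (∀ w : Equiv.Perm (Fin n), w ^ 2 = 1 →
        (Finset.univ.filter fun i : Fin n => w i ≠ i).card = 2 * e →
          permN w ≤ permN we ∧ (permN w = permN we → w = we)) ∧
      permN we = e * (n - e) ∧
      IsGreatest {m | ∃ w : Equiv.Perm (Fin n), w ^ 2 = 1 ∧ permN w = m}
        ((n ^ 2 - n % 2) / 4) := by
  exact AuxPermN.permN_involution_max' he we hwe
end
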